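/- arXiv:1906.00788 — 2 statements merged into one kernel-verified Lean document; each statement's English description precedes it below -/
import Mathlib

section
/- For all integers m, n, k with k ≥ 0 and any complex h with t^m h^3 - t^m v_{-m} h^2 + v_m h - 1 ≠ 0: ∑_{j=0}^{k} w_{n+jm} h^j = (t^m w_{n+km} h^{k+3} - (v_m w_{n+m+km} - w_{n+2m+km}) h^{k+2} + w_{n+m+km} h^{k+1} - t^m w_{n-m} h^2 + (v_m w_n - w_{n+m}) h - w_n) / (t^m h^3 - t^m v_{-m} h^2 + v_m h - 1). -/
/-!
The companion matrix `M` of `X³ - r X² - s X - t` shifts windows `(w n, w (n+1), w (n+2))` by one,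
so `M ^ m` shifts them by `m`. Cayley–Hamilton for `M ^ m`, whose trace is `v m`, whose
determinant is `t ^ m` and whose second elementary symmetric function is
`tr (adj (M ^ m)) = t ^ m * tr (M ^ (-m)) = t ^ m * v (-m)`, gives the `m`-step recurrence
`w (n + 3m) = v m * w (n + 2m) - t ^ m * v (-m) * w (n + m) + t ^ m * w n`.
Multiplying the sum by `t ^ m h³ - t ^ m v (-m) h² + v m h - 1` then telescopes.
-/

open Matrix

theorem mul_sum_pow_of_rec3 {R : Type*} [CommRing R] {u : ℤ → R} {p q d : R}
    (hu : ∀ j, u (j + 3) = p * u (j + 2) - q * u (j + 1) + d * u j) (h : R) (k : ℕ) :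
    (d * h ^ 3 - q * h ^ 2 + p * h - 1) * ∑ j ∈ Finset.range (k + 1), u j * h ^ j =
      d * u k * h ^ (k + 3) - (p * u (k + 1) - u (k + 2)) * h ^ (k + 2) + u (k + 1) * h ^ (k + 1)
        - d * u (-1) * h ^ 2 + (p * u 0 - u 1) * h - u 0 := by
  induction k with
  | zero =>
    have hu₁ := hu (-1)
    norm_num at hu₁ ⊢
    linear_combination (-h ^ 2) * hu₁
  | succ k ih =>
    rw [Finset.sum_range_succ, mul_add, ih]
    push_cast
    rw [show (k : ℤ) + 1 + 1 = k + 2 by ring, show (k : ℤ) + 1 + 2 = k + 3 by ring]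
    linear_combination (-h ^ (k + 3)) * hu k

theorem Matrix.pow_three_fin_three {R : Type*} [CommRing R] (A : Matrix (Fin 3) (Fin 3) R) :
    A ^ 3 = A.trace • A ^ 2 - A.adjugate.trace • A + A.det • 1 := by
  ext i j
  fin_cases i <;> fin_cases j <;>
    simp [pow_succ, mul_apply, Fin.sum_univ_three, trace_fin_three, det_fin_three,
      adjugate_fin_three] <;> ring

theorem Matrix.det_zpow {n K : Type*} [Fintype n] [DecidableEq n] [Field K]
    (A : Matrix n n K) (m : ℤ) : (A ^ m).det = A.det ^ m := by
  cases m with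
  | ofNat k => simp [det_pow]
  | negSucc k => simp [zpow_negSucc, det_nonsing_inv, det_pow, Ring.inverse_eq_inv']

section Recurrence

variable {K : Type*} [Field K] {r s t : K}

def IsThirdOrderRec (r s t : K) (x : ℤ → K) : Prop :=
  ∀ n : ℤ, x n = r * x (n - 1) + s * x (n - 2) + t * x (n - 3)

theorem IsThirdOrderRec.sub {x y : ℤ → K} (hx : IsThirdOrderRec r s t x)
    (hy : IsThirdOrderRec r s t y) : IsThirdOrderRec r s t (x - y) := fun n => by
  simp only [Pi.sub_apply, hx n, hy n]; ring

def companion3 (r s t : K) : Matrix (Fin 3) (Fin 3) K := !![0, 1, 0; 0, 0, 1; t, s, r]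

def window3 (x : ℤ → K) (n : ℤ) : Fin 3 → K := ![x n, x (n + 1), x (n + 2)]

theorem det_companion3 : (companion3 r s t).det = t := by
  simp [companion3, det_fin_three]

theorem isUnit_det_companion3 (ht : t ≠ 0) : IsUnit (companion3 r s t).det := by
  rw [det_companion3]; exact ht.isUnit

theorem companion3_pow_three :
    companion3 r s t ^ 3 = r • companion3 r s t ^ 2 + s • companion3 r s t + t • 1 := by
  ext i j
  fin_cases i <;> fin_cases j <;>
    simp [companion3, pow_succ, mul_apply, Fin.sum_univ_three, one_apply] <;> ring

theorem companion3_zpow_eq (ht : t ≠ 0) (n : ℤ) :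
    companion3 r s t ^ n = r • companion3 r s t ^ (n - 1) + s • companion3 r s t ^ (n - 2)
      + t • companion3 r s t ^ (n - 3) := by
  have hM : IsUnit (companion3 r s t).det := isUnit_det_companion3 ht
  set M := companion3 r s t
  calc M ^ n = M ^ (n - 3) * M ^ ((3 : ℕ) : ℤ) := by rw [← zpow_add hM]; ring_nf
    _ = M ^ (n - 3) * (r • M ^ 2 + s • M + t • 1) := by
      rw [zpow_natCast, companion3_pow_three]
    _ = r • (M ^ (n - 3) * M ^ ((2 : ℕ) : ℤ)) + s • (M ^ (n - 3) * M ^ (1 : ℤ))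
        + t • M ^ (n - 3) := by
      simp only [mul_add, mul_smul_comm, mul_one, zpow_natCast, zpow_one]
    _ = _ := by simp only [← zpow_add hM]; ring_nf

theorem companion3_mulVec_window3 {x : ℤ → K} (hx : IsThirdOrderRec r s t x) (n : ℤ) :
    companion3 r s t *ᵥ window3 x n = window3 x (n + 1) := by
  have h := hx (n + 3)
  rw [show n + 3 - 1 = n + 2 by ring, show n + 3 - 2 = n + 1 by ring, add_sub_cancel_right] at h
  ext i
  fin_cases i <;> simp [companion3, window3, mulVec, dotProduct, Fin.sum_univ_three, add_assoc]
  rw [h]; ring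

theorem window3_add (ht : t ≠ 0) {x : ℤ → K} (hx : IsThirdOrderRec r s t x) (m n : ℤ) :
    window3 x (n + m) = companion3 r s t ^ m *ᵥ window3 x n := by
  have hM : IsUnit (companion3 r s t).det := isUnit_det_companion3 ht
  induction m using Int.induction_on generalizing n with
  | zero => simp
  | succ i ih =>
    calc window3 x (n + (i + 1)) = window3 x (n + 1 + i) := by rw [add_comm (i : ℤ), add_assoc]
      _ = companion3 r s t ^ ((i : ℤ) + 1) *ᵥ window3 x n := by
        rw [ih, ← companion3_mulVec_window3 hx, mulVec_mulVec, ← zpow_add_one hM]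
  | pred i ih =>
    calc window3 x (n + (-i - 1)) = window3 x (n - 1 + -i) := by ring_nf
      _ = companion3 r s t ^ (-(i : ℤ) - 1) *ᵥ window3 x n := by
        have step := companion3_mulVec_window3 hx (n - 1)
        rw [sub_add_cancel] at step
        rw [ih, ← step, mulVec_mulVec, ← zpow_add_one hM, sub_add_cancel]

theorem IsThirdOrderRec.ext (ht : t ≠ 0) {x y : ℤ → K} (hx : IsThirdOrderRec r s t x)
    (hy : IsThirdOrderRec r s t y) (h0 : x 0 = y 0) (h1 : x 1 = y 1) (h2 : x 2 = y 2) :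
    x = y := by
  have hstart : window3 (x - y) 0 = 0 := by
    ext i; fin_cases i <;> simp [window3, h0, h1, h2]
  funext n
  have h := congrFun (window3_add ht (hx.sub hy) n 0) 0
  rw [hstart, mulVec_zero, zero_add] at h
  simpa [window3, sub_eq_zero] using h

theorem isThirdOrderRec_trace_companion3_zpow (ht : t ≠ 0) :
    IsThirdOrderRec r s t (fun m => (companion3 r s t ^ m).trace) := fun n => by
  simp only [companion3_zpow_eq ht n, trace_add, trace_smul, smul_eq_mul]

section Trace

variable {v : ℤ → K} (hv : IsThirdOrderRec r s t v) (hv0 : v 0 = 3) (hv1 : v 1 = r)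
  (hv2 : v 2 = r ^ 2 + 2 * s)
include hv hv0 hv1 hv2

theorem trace_companion3_zpow (ht : t ≠ 0) (m : ℤ) : (companion3 r s t ^ m).trace = v m := by
  refine congrFun ((isThirdOrderRec_trace_companion3_zpow ht).ext ht hv ?_ ?_ ?_) m
  · simp [hv0]
  · simp [hv1, companion3, trace_fin_three]
  · simp [hv2, companion3, trace_fin_three, pow_two]; ring

theorem trace_adjugate_companion3_zpow (ht : t ≠ 0) (m : ℤ) :
    (companion3 r s t ^ m).adjugate.trace = t ^ m * v (-m) := by
  have hM : IsUnit (companion3 r s t).det := isUnit_det_companion3 ht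
  have hA : IsUnit (companion3 r s t ^ m).det := hM.det_zpow m
  have hadj : (companion3 r s t ^ m).adjugate
      = (companion3 r s t ^ m).det • companion3 r s t ^ (-m) := by
    rw [zpow_neg hM, inv_def, smul_smul, Ring.mul_inverse_cancel _ hA, one_smul]
  rw [hadj, trace_smul, det_zpow, det_companion3, trace_companion3_zpow hv hv0 hv1 hv2 ht,
    smul_eq_mul]

theorem add_three_mul_of_isThirdOrderRec (ht : t ≠ 0) {w : ℤ → K} (hw : IsThirdOrderRec r s t w)
    (m n : ℤ) :
    w (n + 3 * m) = v m * w (n + 2 * m) - t ^ m * v (-m) * w (n + m) + t ^ m * w n := by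
  have hM : IsUnit (companion3 r s t).det := isUnit_det_companion3 ht
  have hpow : ∀ j : ℕ, (companion3 r s t ^ m) ^ j = companion3 r s t ^ (j * m) := fun j => by
    rw [← zpow_natCast, ← zpow_mul' _ hM]
  have h := congrArg (· *ᵥ window3 w n) (pow_three_fin_three (companion3 r s t ^ m))
  simp only [hpow, add_mulVec, sub_mulVec, smul_mulVec, one_mulVec, ← window3_add ht hw,
    Nat.cast_ofNat] at h
  have h0 := congrFun h 0
  simp only [window3, Pi.add_apply, Pi.sub_apply, Pi.smul_apply, smul_eq_mul,
    cons_val_zero] at h0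
  rw [h0, trace_companion3_zpow hv hv0 hv1 hv2 ht,
    trace_adjugate_companion3_zpow hv hv0 hv1 hv2 ht, det_zpow, det_companion3]

end Trace

end Recurrence

theorem stmt_8_general (r s t : ℂ) (ht : t ≠ 0)
    (w v : ℤ → ℂ)
    (hw : ∀ n : ℤ, w n = r * w (n-1) + s * w (n-2) + t * w (n-3))
    (hv : ∀ n : ℤ, v n = r * v (n-1) + s * v (n-2) + t * v (n-3))
    (hv0 : v 0 = 3) (hv1 : v 1 = r) (hv2 : v 2 = r ^ 2 + 2 * s) :
    ∀ (m n : ℤ) (k : ℕ) (h : ℂ),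
      t ^ m * h ^ 3 - t ^ m * v (-m) * h ^ 2 + v m * h - 1 ≠ 0 →
      ∑ j ∈ Finset.range (k+1), w (n + (j : ℤ) * m) * h ^ j =
        (t ^ m * w (n + (k : ℤ) * m) * h ^ (k+3)
          - (v m * w (n + m + (k : ℤ) * m) - w (n + 2 * m + (k : ℤ) * m)) * h ^ (k+2)
          + w (n + m + (k : ℤ) * m) * h ^ (k+1)
          - t ^ m * w (n - m) * h ^ 2
          + (v m * w n - w (n + m)) * h - w n)
        / (t ^ m * h ^ 3 - t ^ m * v (-m) * h ^ 2 + v m * h - 1) := by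
  intro m n k h hD
  have hstep (j : ℤ) : w (n + (j + 3) * m) = v m * w (n + (j + 2) * m)
      - t ^ m * v (-m) * w (n + (j + 1) * m) + t ^ m * w (n + j * m) := by
    have := add_three_mul_of_isThirdOrderRec hv hv0 hv1 hv2 ht hw m (n + j * m)
    ring_nf at this ⊢
    exact this
  rw [eq_div_iff hD, mul_comm, mul_sum_pow_of_rec3 (u := fun j => w (n + j * m)) hstep h k]
  ring_nf

theorem stmt_8 (r s t a b c : ℂ) (ht : t ≠ 0)
    (w v : ℤ → ℂ)
    (hw : ∀ n : ℤ, w n = r * w (n-1) + s * w (n-2) + t * w (n-3))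
    (hw0 : w 0 = a) (hw1 : w 1 = b) (hw2 : w 2 = c)
    (hv : ∀ n : ℤ, v n = r * v (n-1) + s * v (n-2) + t * v (n-3))
    (hv0 : v 0 = 3) (hv1 : v 1 = r) (hv2 : v 2 = r ^ 2 + 2 * s) :
    ∀ (m n : ℤ) (k : ℕ) (h : ℂ),
      t ^ m * h ^ 3 - t ^ m * v (-m) * h ^ 2 + v m * h - 1 ≠ 0 →
      ∑ j ∈ Finset.range (k+1), w (n + (j : ℤ) * m) * h ^ j =
        (t ^ m * w (n + (k : ℤ) * m) * h ^ (k+3)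
          - (v m * w (n + m + (k : ℤ) * m) - w (n + 2 * m + (k : ℤ) * m)) * h ^ (k+2)
          + w (n + m + (k : ℤ) * m) * h ^ (k+1)
          - t ^ m * w (n - m) * h ^ 2
          + (v m * w n - w (n + m)) * h - w n)
        / (t ^ m * h ^ 3 - t ^ m * v (-m) * h ^ 2 + v m * h - 1) :=
  stmt_8_general r s t ht w v hw hv hv0 hv1 hv2
end

section
/- For all integers n, t^{-n} (v_n^3 - v_{3n}) = t^n (v_{-n}^3 - v_{-3n}). -/
/-!
Let `x, y, z` be the roots of `X³ - r X² - s X - t`. Since `t ≠ 0` the recurrence can be run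
backwards as well as forwards, so `v n = xⁿ + yⁿ + zⁿ` for every integer `n`, and `tⁿ = (xyz)ⁿ`.
With `a = xⁿ, b = yⁿ, c = zⁿ` we have `(a + b + c)³ - (a³ + b³ + c³) = 3 (a + b) (b + c) (c + a)`;
replacing `a, b, c` by their inverses multiplies this by `(abc)⁻²`, which is the claimed identity.
-/

theorem IsAlgClosed.exists_vieta_cubic {K : Type*} [Field K] [IsAlgClosed K] (r s t : K) :
    ∃ x y z : K, x + y + z = r ∧ x * y + x * z + y * z = -s ∧ x * y * z = t := by
  let P : Cubic K := ⟨1, -r, -s, -t⟩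
  have ha : P.a ≠ 0 := one_ne_zero
  obtain ⟨x, y, z, h3⟩ := (Cubic.splits_iff_roots_eq_three (φ := RingHom.id K) ha).mp
    (IsAlgClosed.splits _)
  have hb : -r = 1 * -(x + y + z) := Cubic.b_eq_three_roots ha h3
  have hc : -s = 1 * (x * y + x * z + y * z) := Cubic.c_eq_three_roots ha h3
  have hd : -t = 1 * -(x * y * z) := Cubic.d_eq_three_roots ha h3
  exact ⟨x, y, z, by linear_combination hb, by linear_combination -hc, by linear_combination hd⟩

theorem eq_of_third_order_recurrence {R : Type*} [CommRing R] [IsDomain R] {r s t : R}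
    (ht : t ≠ 0) {u w : ℤ → R}
    (hu : ∀ n, u (n + 3) = r * u (n + 2) + s * u (n + 1) + t * u n)
    (hw : ∀ n, w (n + 3) = r * w (n + 2) + s * w (n + 1) + t * w n)
    (h0 : u 0 = w 0) (h1 : u 1 = w 1) (h2 : u 2 = w 2) : u = w := by
  have key : ∀ n : ℤ, u n = w n ∧ u (n + 1) = w (n + 1) ∧ u (n + 2) = w (n + 2) := by
    intro n
    induction n using Int.induction_on with
    | zero => simpa using ⟨h0, h1, h2⟩
    | succ k ih =>
      obtain ⟨e0, e1, e2⟩ := ih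
      rw [add_assoc, add_assoc, one_add_one_eq_two, show (1 : ℤ) + 2 = 3 by norm_num, hu, hw]
      exact ⟨e1, e2, by rw [e0, e1, e2]⟩
    | pred k ih =>
      obtain ⟨e0, e1, e2⟩ := ih
      have hu' := hu (-k - 1)
      have hw' := hw (-k - 1)
      simp only [show -(k : ℤ) - 1 + 3 = -k + 2 by ring, show -(k : ℤ) - 1 + 2 = -k + 1 by ring,
        sub_add_cancel] at hu' hw' ⊢
      exact ⟨mul_left_cancel₀ ht (by linear_combination hw' - hu' + e2 - r * e1 - s * e0), e0, e1⟩
  exact funext fun n => (key n).1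

section

variable {K : Type*} [Field K] {r s t x y z : K}

theorem zpow_add_three_eq_of_cubic_eq {w : K} (hw : w ≠ 0)
    (hroot : w ^ 3 = r * w ^ 2 + s * w + t) (n : ℤ) :
    w ^ (n + 3) = r * w ^ (n + 2) + s * w ^ (n + 1) + t * w ^ n := by
  simp only [zpow_add₀ hw, zpow_one]
  norm_cast
  rw [hroot]
  ring

theorem cube_sub_eq_prod_of_vieta (hsum : x + y + z = r)
    (hpair : x * y + x * z + y * z = -s) (hprod : x * y * z = t) (w : K) :
    w ^ 3 - (r * w ^ 2 + s * w + t) = (w - x) * (w - y) * (w - z) := by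
  linear_combination w ^ 2 * hsum - w * hpair + hprod

def zpowSum (x y z : K) (n : ℤ) : K := x ^ n + y ^ n + z ^ n

theorem zpowSum_zero : zpowSum x y z 0 = 3 := by
  norm_num [zpowSum]

theorem zpowSum_one (hsum : x + y + z = r) : zpowSum x y z 1 = r := by
  simpa [zpowSum] using hsum

theorem zpowSum_two (hsum : x + y + z = r) (hpair : x * y + x * z + y * z = -s) :
    zpowSum x y z 2 = r ^ 2 + 2 * s := by
  simp only [zpowSum]
  norm_cast
  linear_combination (x + y + z + r) * hsum - 2 * hpair

theorem zpowSum_add_three (ht : t ≠ 0) (hsum : x + y + z = r)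
    (hpair : x * y + x * z + y * z = -s) (hprod : x * y * z = t) (n : ℤ) :
    zpowSum x y z (n + 3) =
      r * zpowSum x y z (n + 2) + s * zpowSum x y z (n + 1) + t * zpowSum x y z n := by
  have hxyz : x * y * z ≠ 0 := hprod ▸ ht
  have hx : x ≠ 0 := left_ne_zero_of_mul (left_ne_zero_of_mul hxyz)
  have hy : y ≠ 0 := right_ne_zero_of_mul (left_ne_zero_of_mul hxyz)
  have hz : z ≠ 0 := right_ne_zero_of_mul hxyz
  have hroot : ∀ w, (w - x) * (w - y) * (w - z) = 0 → w ^ 3 = r * w ^ 2 + s * w + t :=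
    fun w hw => sub_eq_zero.mp ((cube_sub_eq_prod_of_vieta hsum hpair hprod w).trans hw)
  have ex := zpow_add_three_eq_of_cubic_eq hx (hroot x (by ring)) n
  have ey := zpow_add_three_eq_of_cubic_eq hy (hroot y (by ring)) n
  have ez := zpow_add_three_eq_of_cubic_eq hz (hroot z (by ring)) n
  simp only [zpowSum]
  linear_combination ex + ey + ez

theorem inv_mul_cube_sum_sub_sum_cube (a b c : K) :
    (a * b * c)⁻¹ * ((a + b + c) ^ 3 - (a ^ 3 + b ^ 3 + c ^ 3)) =
      a * b * c * ((a⁻¹ + b⁻¹ + c⁻¹) ^ 3 - (a⁻¹ ^ 3 + b⁻¹ ^ 3 + c⁻¹ ^ 3)) := by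
  rcases eq_or_ne a 0 with rfl | ha
  · simp
  rcases eq_or_ne b 0 with rfl | hb
  · simp
  rcases eq_or_ne c 0 with rfl | hc
  · simp
  field_simp
  ring

theorem zpow_neg_mul_zpowSum_cube_sub (x y z : K) (n : ℤ) :
    (x * y * z) ^ (-n) * (zpowSum x y z n ^ 3 - zpowSum x y z (3 * n)) =
      (x * y * z) ^ n * (zpowSum x y z (-n) ^ 3 - zpowSum x y z (-3 * n)) := by
  have h3 : ∀ w : K, w ^ (3 * n) = (w ^ n) ^ 3 := fun w => by
    rw [mul_comm, zpow_mul]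
    norm_cast
  have hm3 : ∀ w : K, w ^ (-3 * n) = (w ^ n)⁻¹ ^ 3 := fun w => by
    rw [neg_mul, zpow_neg, h3, inv_pow]
  simp only [zpowSum, h3, hm3, zpow_neg, mul_zpow]
  exact inv_mul_cube_sum_sub_sum_cube _ _ _

end

theorem stmt_11 (r s t : ℂ) (ht : t ≠ 0)
    (v : ℤ → ℂ)
    (hv : ∀ n : ℤ, v n = r * v (n-1) + s * v (n-2) + t * v (n-3))
    (hv0 : v 0 = 3) (hv1 : v 1 = r) (hv2 : v 2 = r ^ 2 + 2 * s) :
    ∀ n : ℤ, t ^ (-n) * (v n ^ 3 - v (3 * n)) = t ^ n * (v (-n) ^ 3 - v (-3 * n)) := by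
  obtain ⟨x, y, z, hsum, hpair, hprod⟩ := IsAlgClosed.exists_vieta_cubic r s t
  have hv_add_three : ∀ n, v (n + 3) = r * v (n + 2) + s * v (n + 1) + t * v n := fun n => by
    simpa [add_sub_assoc] using hv (n + 3)
  have hv_eq : v = zpowSum x y z :=
    eq_of_third_order_recurrence ht hv_add_three (zpowSum_add_three ht hsum hpair hprod)
      (hv0.trans zpowSum_zero.symm) (hv1.trans (zpowSum_one hsum).symm)
      (hv2.trans (zpowSum_two hsum hpair).symm)
  intro n
  rw [hv_eq, ← hprod]
  exact zpow_neg_mul_zpowSum_cube_sub x y z n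
end
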